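/- With the notation of the projected-LS identity, writing l̃ = l + v with l = P a (P orthonormal columns), the error e := l̂ − l̃ satisfies e = −I_M (Ψ_M^⊤Ψ_M)^{−1} I_M^⊤ Ψ (l + v), and hence ‖l̂ − l̃‖ ≤ ‖(Ψ_M^⊤Ψ_M)^{−1}‖ · (dist(P̂, P)·‖l‖ + ‖v‖). -/

import Mathlib

open Matrix BigOperators

noncomputable def specNorm {m n : Type*} [Fintype m] [Fintype n] [DecidableEq n]
    (A : Matrix m n ℝ) : ℝ :=
  ‖LinearMap.toContinuousLinearMap (Matrix.toEuclideanLin A)‖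

noncomputable def distP {n r : ℕ} (Q P : Matrix (Fin n) (Fin r) ℝ) : ℝ :=
  specNorm ((1 - Q * Qᵀ) * P)

def selMat {n : ℕ} (M : Finset (Fin n)) : Matrix (Fin n) {i // i ∈ M} ℝ :=
  fun i j => if (j : Fin n) = i then 1 else 0

noncomputable def enorm' {n : ℕ} (v : Fin n → ℝ) : ℝ :=
  Real.sqrt (∑ i, v i ^ 2)

noncomputable def smin {m n : Type*} [Fintype m] [Fintype n] [DecidableEq m] [DecidableEq n]
    (A : Matrix m n ℝ) : ℝ :=
  Real.sqrt (⨅ i, (show (Aᵀ * A).IsHermitian by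
    simpa [Matrix.conjTranspose_eq_transpose_of_trivial] using Matrix.isHermitian_conjTranspose_mul_self A).eigenvalues i)

noncomputable def lamMax {m : Type*} [Fintype m] [DecidableEq m]
    {A : Matrix m m ℝ} (hA : A.IsHermitian) : ℝ :=
  ⨆ i, hA.eigenvalues i

noncomputable def lamMin {m : Type*} [Fintype m] [DecidableEq m]
    {A : Matrix m m ℝ} (hA : A.IsHermitian) : ℝ :=
  ⨅ i, hA.eigenvalues i

noncomputable def eigDesc {n : ℕ} {A : Matrix (Fin n) (Fin n) ℝ} (hA : A.IsHermitian)
    (k : ℕ) : ℝ :=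
  ((List.ofFn hA.eigenvalues).mergeSort (fun a b => decide (b ≤ a))).getD k 0


/-! Since `Ψ` is symmetric, `Ψ_Mᵀ = I_Mᵀ Ψ`, which is the error formula. For the bound, measure
matrices in the `L²` operator norm (which is `specNorm`): `I_M` has orthonormal columns,
so it is an isometry and `I_Mᵀ` has norm at most `1`; `Ψ = 1 - P̂P̂ᵀ` is a star projection, so
`‖Ψ‖ ≤ 1` by the C⋆-identity; and `Ψ (P a) = (Ψ P) a` with `‖a‖ = ‖P a‖` gives
`‖Ψ l‖ ≤ dist(P̂, P) ‖l‖`. -/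

open scoped Matrix.Norms.L2Operator

lemma enorm'_eq_norm_toLp {n : ℕ} (v : Fin n → ℝ) : enorm' v = ‖WithLp.toLp 2 v‖ := by
  simp [enorm', EuclideanSpace.norm_eq, sq_abs]

namespace Matrix

variable {m n : Type*} [Fintype m] [Fintype n] [DecidableEq n]

lemma specNorm_eq_l2_opNorm (A : Matrix m n ℝ) : specNorm A = ‖A‖ := rfl

lemma l2_opNorm_transpose [DecidableEq m] (A : Matrix m n ℝ) : ‖Aᵀ‖ = ‖A‖ := by
  rw [← conjTranspose_eq_transpose_of_trivial, l2_opNorm_conjTranspose]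

lemma norm_toLp_mulVec_le (A : Matrix m n ℝ) (x : n → ℝ) :
    ‖WithLp.toLp 2 (A *ᵥ x)‖ ≤ ‖A‖ * ‖WithLp.toLp 2 x‖ :=
  l2_opNorm_mulVec A (WithLp.toLp 2 x)

lemma norm_toLp_mulVec_le_of_l2_opNorm_le_one {A : Matrix m n ℝ} (hA : ‖A‖ ≤ 1) (x : n → ℝ) :
    ‖WithLp.toLp 2 (A *ᵥ x)‖ ≤ ‖WithLp.toLp 2 x‖ :=
  (norm_toLp_mulVec_le A x).trans (mul_le_of_le_one_left (norm_nonneg _) hA)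

section Isometry

variable {Q : Matrix m n ℝ} (hQ : Qᵀ * Q = 1)
include hQ

lemma norm_toLp_mulVec_of_transpose_mul_self_eq_one (x : n → ℝ) :
    ‖WithLp.toLp 2 (Q *ᵥ x)‖ = ‖WithLp.toLp 2 x‖ := by
  have hinner : (Q *ᵥ x) ⬝ᵥ (Q *ᵥ x) = x ⬝ᵥ x := by
    rw [dotProduct_mulVec, ← vecMul_transpose, vecMul_vecMul, hQ, vecMul_one]
  rw [← sq_eq_sq₀ (norm_nonneg _) (norm_nonneg _), ← real_inner_self_eq_norm_sq,
    ← real_inner_self_eq_norm_sq, EuclideanSpace.inner_toLp_toLp,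
    EuclideanSpace.inner_toLp_toLp, star_trivial, star_trivial, hinner]

lemma norm_toLp_mulVec_mulVec_le_of_transpose_mul_self_eq_one {k : Type*} [Fintype k]
    (A : Matrix k m ℝ) (x : n → ℝ) :
    ‖WithLp.toLp 2 (A *ᵥ (Q *ᵥ x))‖ ≤ ‖A * Q‖ * ‖WithLp.toLp 2 (Q *ᵥ x)‖ := by
  rw [mulVec_mulVec, norm_toLp_mulVec_of_transpose_mul_self_eq_one hQ]
  exact norm_toLp_mulVec_le _ _

lemma l2_opNorm_le_one_of_transpose_mul_self_eq_one : ‖Q‖ ≤ 1 := by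
  rw [l2_opNorm_def]
  refine ContinuousLinearMap.opNorm_le_bound _ zero_le_one fun x => ?_
  rw [one_mul]
  exact (norm_toLp_mulVec_of_transpose_mul_self_eq_one hQ x.ofLp).le

lemma isStarProjection_mul_transpose_of_transpose_mul_self_eq_one [DecidableEq m] :
    IsStarProjection (Q * Qᵀ) where
  isIdempotentElem := by
    rw [IsIdempotentElem, Matrix.mul_assoc, ← Matrix.mul_assoc Qᵀ, hQ, Matrix.one_mul]
  isSelfAdjoint := by
    rw [IsSelfAdjoint, star_eq_conjTranspose, conjTranspose_eq_transpose_of_trivial,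
      transpose_mul, transpose_transpose]

end Isometry

end Matrix

lemma selMat_transpose_mul_selMat {n : ℕ} (M : Finset (Fin n)) :
    (selMat M)ᵀ * selMat M = 1 := by
  ext j k
  simp only [selMat, mul_apply, transpose_apply, one_apply, ite_mul, one_mul, zero_mul]
  rw [Finset.sum_ite_eq, if_pos (Finset.mem_univ _)]
  exact if_congr (Subtype.ext_iff.symm.trans eq_comm) rfl rfl

theorem projected_LS_error_bound_general
    {n r : ℕ} (P Phat : Matrix (Fin n) (Fin r) ℝ)
    (hP : Pᵀ * P = 1) (hPhat : Phatᵀ * Phat = 1)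
    (M : Finset (Fin n)) (ltil l v : Fin n → ℝ) (aco : Fin r → ℝ)
    (hl : l = P *ᵥ aco) (hv : v = ltil - l) :
    let Ψ : Matrix (Fin n) (Fin n) ℝ := 1 - Phat * Phatᵀ
    let ΨM := Ψ * selMat M
    let G := ΨMᵀ * ΨM
    ∀ (_ : IsUnit G),
    let lhat := ltil - selMat M *ᵥ (G⁻¹ *ᵥ (ΨMᵀ *ᵥ ltil))
    (lhat - ltil = -(selMat M *ᵥ (G⁻¹ *ᵥ ((selMat M)ᵀ *ᵥ (Ψ *ᵥ (l + v)))))) ∧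
    enorm' (lhat - ltil) ≤ specNorm G⁻¹ * (distP Phat P * enorm' l + enorm' v) := by
  intro Ψ ΨM G _ lhat
  have hΨ : IsStarProjection Ψ :=
    (isStarProjection_mul_transpose_of_transpose_mul_self_eq_one hPhat).one_sub
  have hΨM : ΨMᵀ = (selMat M)ᵀ * Ψ := by
    rw [transpose_mul, ← conjTranspose_eq_transpose_of_trivial Ψ, ← star_eq_conjTranspose,
      hΨ.isSelfAdjoint.star_eq]
  have herr : lhat - ltil = -(selMat M *ᵥ (G⁻¹ *ᵥ ((selMat M)ᵀ *ᵥ (Ψ *ᵥ (l + v))))) := by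
    rw [hv, add_sub_cancel, sub_sub_cancel_left, hΨM, ← mulVec_mulVec]
  have hΨl : ‖WithLp.toLp 2 (Ψ *ᵥ l)‖ ≤ distP Phat P * ‖WithLp.toLp 2 l‖ := by
    rw [hl]
    exact norm_toLp_mulVec_mulVec_le_of_transpose_mul_self_eq_one hP Ψ aco
  have hΨv : ‖WithLp.toLp 2 (Ψ *ᵥ v)‖ ≤ ‖WithLp.toLp 2 v‖ :=
    norm_toLp_mulVec_le_of_l2_opNorm_le_one hΨ.norm_le v
  have hSt : ‖(selMat M)ᵀ‖ ≤ 1 := by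
    rw [l2_opNorm_transpose]
    exact l2_opNorm_le_one_of_transpose_mul_self_eq_one (selMat_transpose_mul_selMat M)
  refine ⟨herr, ?_⟩
  rw [herr, enorm'_eq_norm_toLp, enorm'_eq_norm_toLp, enorm'_eq_norm_toLp, WithLp.toLp_neg,
    norm_neg, norm_toLp_mulVec_of_transpose_mul_self_eq_one (selMat_transpose_mul_selMat M),
    specNorm_eq_l2_opNorm]
  calc ‖WithLp.toLp 2 (G⁻¹ *ᵥ ((selMat M)ᵀ *ᵥ (Ψ *ᵥ (l + v))))‖
      ≤ ‖G⁻¹‖ * ‖WithLp.toLp 2 ((selMat M)ᵀ *ᵥ (Ψ *ᵥ (l + v)))‖ := norm_toLp_mulVec_le _ _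
    _ ≤ ‖G⁻¹‖ * ‖WithLp.toLp 2 (Ψ *ᵥ l + Ψ *ᵥ v)‖ := by
      rw [mulVec_add]
      gcongr
      exact norm_toLp_mulVec_le_of_l2_opNorm_le_one hSt _
    _ ≤ ‖G⁻¹‖ * (distP Phat P * ‖WithLp.toLp 2 l‖ + ‖WithLp.toLp 2 v‖) := by
      rw [WithLp.toLp_add]
      gcongr
      exact (norm_add_le _ _).trans (add_le_add hΨl hΨv)

theorem projected_LS_error_bound
    {n r : ℕ} (P Phat : Matrix (Fin n) (Fin r) ℝ)
    (hP : Pᵀ * P = 1) (hPhat : Phatᵀ * Phat = 1)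
    (M : Finset (Fin n)) (ltil l v a : Fin n → ℝ) (aco : Fin r → ℝ)
    (hl : l = P *ᵥ aco) (hv : v = ltil - l) :
    let Ψ : Matrix (Fin n) (Fin n) ℝ := 1 - Phat * Phatᵀ
    let ΨM := Ψ * selMat M
    let G := ΨMᵀ * ΨM
    ∀ (_ : IsUnit G),
    let lhat := ltil - selMat M *ᵥ (G⁻¹ *ᵥ (ΨMᵀ *ᵥ ltil))
    (lhat - ltil = -(selMat M *ᵥ (G⁻¹ *ᵥ ((selMat M)ᵀ *ᵥ (Ψ *ᵥ (l + v)))))) ∧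
    enorm' (lhat - ltil) ≤ specNorm G⁻¹ * (distP Phat P * enorm' l + enorm' v) :=
  projected_LS_error_bound_general P Phat hP hPhat M ltil l v aco hl hv
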